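/- arXiv:1702.04836 — 3 statements merged into one kernel-verified Lean document; each statement's English description precedes it below -/
import Mathlib

section
/- For each of the four BB84 input states (|0⟩, |1⟩, |+⟩, |−⟩), the probability that a weak measurement of either H^+ or H^- (with Gaussian pointer of variance σ² and coupling g) collapses the state into its orthogonal state is δ_wm = (1/4)[1 − exp(−g²/(8σ²))]. -/
/-!
The vector `ψ⊥ = (-β̄, ᾱ)` is orthogonal to `ψ = (α, β)`, so the coherent part `e |ψ⟩⟨ψ|` of the
state contributes nothing; the dephased part contributes `(1 - e)(|α|²|β|² + |β|²|α|²)`.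
For a BB84 state `{|α|², |β|²} = {cos²(π/8), sin²(π/8)}`, and
`cos²(π/8) sin²(π/8) = (2 + √2)(2 - √2)/16 = 1/8`.
-/

open Matrix Complex Real ComplexConjugate

theorem cos_sq_pi_div_eight_mul_sin_sq :
    Real.cos (π / 8) ^ 2 * Real.sin (π / 8) ^ 2 = 1 / 8 := by
  have h2 : √2 ^ 2 = 2 := sq_sqrt zero_le_two
  have h2le : √2 ≤ 2 := by nlinarith [sqrt_nonneg 2]
  rw [cos_pi_div_eight, sin_pi_div_eight, div_pow, div_pow,
    sq_sqrt (by positivity), sq_sqrt (by linarith)]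
  linear_combination (-1/16 : ℝ) * h2

theorem mul_eq_one_div_eight_of_bb84 {a b : ℝ} (hab : a + b = 1)
    (hb : b = Real.cos (π / 8) ^ 2 ∨ b = Real.sin (π / 8) ^ 2) : a * b = 1 / 8 := by
  rw [← cos_sq_pi_div_eight_mul_sin_sq]
  rcases hb with rfl | rfl
  · rw [show a = Real.sin (π / 8) ^ 2 by linarith [Real.sin_sq_add_cos_sq (π / 8)], mul_comm]
  · rw [show a = Real.cos (π / 8) ^ 2 by linarith [Real.sin_sq_add_cos_sq (π / 8)]]

theorem star_dotProduct_vecMulVec_mulVec {n R : Type*} [Fintype n] [CommSemiring R] [StarRing R]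
    (u v : n → R) : star v ⬝ᵥ (vecMulVec u (star u) *ᵥ v) = (star v ⬝ᵥ u) * (star u ⬝ᵥ v) := by
  rw [vecMulVec_mulVec, dotProduct_smul, MulOpposite.smul_eq_mul_unop, MulOpposite.unop_op]

theorem star_perp_dotProduct (α β : ℂ) : star ![-conj β, conj α] ⬝ᵥ ![α, β] = 0 := by
  simp only [dotProduct, Fin.sum_univ_two, Pi.star_apply, RCLike.star_def, cons_val_zero,
    cons_val_one, cons_val_fin_one, map_neg, conj_conj]
  ring

theorem collapse_probability_eq (e : ℝ) (α β : ℂ) :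
    star ![-conj β, conj α] ⬝ᵥ ((e • vecMulVec ![α, β] (star ![α, β])
        + (1 - e) • !![((‖α‖ ^ 2 : ℝ) : ℂ), 0; 0, ((‖β‖ ^ 2 : ℝ) : ℂ)]) *ᵥ ![-conj β, conj α])
      = ((2 * (1 - e) * (‖α‖ ^ 2 * ‖β‖ ^ 2) : ℝ) : ℂ) := by
  rw [add_mulVec, dotProduct_add, smul_mulVec, dotProduct_smul, star_dotProduct_vecMulVec_mulVec,
    star_perp_dotProduct, zero_mul, smul_zero, zero_add, smul_mulVec, dotProduct_smul]
  simp only [dotProduct, Fin.sum_univ_two, mulVec, Pi.star_apply, RCLike.star_def, of_apply,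
    cons_val', cons_val_zero, cons_val_one, cons_val_fin_one, map_neg, conj_conj, smul_add, real_smul]
  push_cast
  linear_combination (1 - (e : ℂ)) * ((‖α‖ : ℂ) ^ 2 * mul_conj' β + (‖β‖ : ℂ) ^ 2 * mul_conj' α)

theorem stmt7_general (σ g : ℝ) (α β : ℂ)
    (hnorm : ‖α‖ ^ 2 + ‖β‖ ^ 2 = 1)
    (hBB84 : ‖β‖ ^ 2 = Real.cos (Real.pi/8) ^ 2 ∨
             ‖β‖ ^ 2 = Real.sin (Real.pi/8) ^ 2) :
    let e := Real.exp (-g^2 / (8 * σ^2))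
    let ψ : Fin 2 → ℂ := ![α, β]
    let ψperp : Fin 2 → ℂ := ![-(starRingEnd ℂ) β, (starRingEnd ℂ) α]
    let ρqubit : Matrix (Fin 2) (Fin 2) ℂ :=
      e • vecMulVec ψ (star ψ)
        + (1 - e) • !![((‖α‖ ^ 2 : ℝ) : ℂ), 0; 0, ((‖β‖ ^ 2 : ℝ) : ℂ)]
    star ψperp ⬝ᵥ (ρqubit *ᵥ ψperp) = (((1/4) * (1 - e) : ℝ) : ℂ) := by
  intro e ψ ψperp ρqubit
  rw [collapse_probability_eq, mul_eq_one_div_eight_of_bb84 hnorm hBB84]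
  congr 1
  ring

/-- for each BB84 input state (making angle π/8 with the H basis),
    the probability that the weak measurement collapses the state into its
    orthogonal state is δ_wm = (1/4)(1 − e^{−g²/(8σ²)}). Basis index 0
    corresponds to |H_⊥⟩ and 1 to |H⟩. -/
theorem stmt7 (σ g : ℝ) (hσ : 0 < σ) (α β : ℂ)
    (hnorm : ‖α‖ ^ 2 + ‖β‖ ^ 2 = 1)
    (hBB84 : ‖β‖ ^ 2 = Real.cos (Real.pi/8) ^ 2 ∨
             ‖β‖ ^ 2 = Real.sin (Real.pi/8) ^ 2) :
    let e := Real.exp (-g^2 / (8 * σ^2))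
    let ψ : Fin 2 → ℂ := ![α, β]
    let ψperp : Fin 2 → ℂ := ![-(starRingEnd ℂ) β, (starRingEnd ℂ) α]
    let ρqubit : Matrix (Fin 2) (Fin 2) ℂ :=
      e • vecMulVec ψ (star ψ)
        + (1 - e) • !![((‖α‖ ^ 2 : ℝ) : ℂ), 0; 0, ((‖β‖ ^ 2 : ℝ) : ℂ)]
    star ψperp ⬝ᵥ (ρqubit *ᵥ ψperp) = (((1/4) * (1 - e) : ℝ) : ℂ) :=
  stmt7_general σ g α β hnorm hBB84
end

section
/- Suppose the true error rates are δ_X = (1−r_x^+)/2 and δ_Z = (1−r_z^0)/2 (unital channel), but the weak measurement observables are uniformly biased to H^±(φ). Then the estimated error rates computed from the biased expectation values via the standard reconstruction formulas are δ̃_X = 1/2 − (r_x^+/2)(cos φ + sin φ) and δ̃_Z = 1/2 − (r_z^0/2)(cos φ − sin φ). -/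
noncomputable section

open Matrix Complex

/-- Pauli X matrix. -/
def PX : Matrix (Fin 2) (Fin 2) ℂ := !![0, 1; 1, 0]
/-- Pauli Y matrix. -/
def PY : Matrix (Fin 2) (Fin 2) ℂ := !![0, -Complex.I; Complex.I, 0]
/-- Pauli Z matrix. -/
def PZ : Matrix (Fin 2) (Fin 2) ℂ := !![1, 0; 0, -1]

/-- The observable `H^s = (1/2)(I + (Z + s X)/√2)`, with `s = ±1`. -/
def Hpm (s : ℂ) : Matrix (Fin 2) (Fin 2) ℂ :=
  (1/2 : ℂ) • ((1 : Matrix (Fin 2) (Fin 2) ℂ) + ((Real.sqrt 2 : ℂ))⁻¹ • (PZ + s • PX))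

/-- Density operator with Bloch coordinates `(rx, ry, rz)`. -/
def blochState (rx ry rz : ℝ) : Matrix (Fin 2) (Fin 2) ℂ :=
  (1/2 : ℂ) • ((1 : Matrix (Fin 2) (Fin 2) ℂ) + (rx : ℂ) • PX + (ry : ℂ) • PY + (rz : ℂ) • PZ)

/-- The rotated projector H^s(φ), s = ±1. -/
def Hrot (s : ℂ) (φ : ℝ) : Matrix (Fin 2) (Fin 2) ℂ :=
  (1/2 : ℂ) • ((1 : Matrix (Fin 2) (Fin 2) ℂ)
    + (s * (Real.sin (Real.pi/4 + φ) : ℂ)) • PX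
    + ((Real.cos (Real.pi/4 + φ) : ℂ)) • PZ)


lemma trace_Hrot_bloch (s : ℂ) (φ : ℝ) (rx ry rz : ℝ) :
    (Hrot s φ * blochState rx ry rz).trace
      = 1/2 * (1 + s * (Real.sin (Real.pi/4 + φ) : ℂ) * rx
          + (Real.cos (Real.pi/4 + φ) : ℂ) * rz) := by
  simp [Hrot, blochState, PX, PY, PZ, Matrix.one_fin_two, Matrix.trace_fin_two,
    Matrix.mul_apply, Fin.sum_univ_two]
  ring
/-- if the true (unital-channel) error rates are δ_X = (1−r_x^+)/2 and
    δ_Z = (1−r_z^0)/2, but the observables are biased to H^±(φ), then the estimates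
    reconstructed by the standard formulas are
    δ̃_X = 1/2 − (r_x^+/2)(cos φ + sin φ) and δ̃_Z = 1/2 − (r_z^0/2)(cos φ − sin φ). -/
theorem stmt9 (φ : ℝ) (rxp ryp ry0 rz0 : ℝ) :
    let ρplus := blochState rxp ryp 0   -- channel output of |+⟩, with r_z^+ = 0
    let ρ0 := blochState 0 ry0 rz0      -- channel output of |0⟩, with r_x^0 = 0
    let rxTilde := (Real.sqrt 2 : ℂ) *
        ((Hrot 1 φ * ρplus).trace - (Hrot (-1) φ * ρplus).trace)
    let rzTilde := (Real.sqrt 2 : ℂ) *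
        ((Hrot 1 φ * ρ0).trace + (Hrot (-1) φ * ρ0).trace - 1)
    (1 - rxTilde)/2 = 1/2 - ((rxp : ℂ)/2) * ((Real.cos φ : ℂ) + (Real.sin φ : ℂ)) ∧
    (1 - rzTilde)/2 = 1/2 - ((rz0 : ℂ)/2) * ((Real.cos φ : ℂ) - (Real.sin φ : ℂ)) := by
  have hsin : (Real.sin (Real.pi/4 + φ) : ℂ)
      = (Real.sqrt 2 : ℂ)/2 * ((Real.cos φ : ℂ) + (Real.sin φ : ℂ)) := by
    rw [Real.sin_add, Real.sin_pi_div_four, Real.cos_pi_div_four]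
    push_cast; ring
  have hcos : (Real.cos (Real.pi/4 + φ) : ℂ)
      = (Real.sqrt 2 : ℂ)/2 * ((Real.cos φ : ℂ) - (Real.sin φ : ℂ)) := by
    rw [Real.cos_add, Real.sin_pi_div_four, Real.cos_pi_div_four]
    push_cast; ring
  have h2 : (Real.sqrt 2 : ℂ) * (Real.sqrt 2 : ℂ) = 2 := by
    have : Real.sqrt 2 * Real.sqrt 2 = 2 := Real.mul_self_sqrt (by norm_num)
    exact_mod_cast this
  constructor
  · simp only [trace_Hrot_bloch, hsin, hcos]
    push_cast [-Complex.ofReal_cos, -Complex.ofReal_sin]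
    linear_combination ((Real.cos φ : ℂ) + (Real.sin φ : ℂ)) * (-(rxp:ℂ)/4) * h2
  · simp only [trace_Hrot_bloch, hsin, hcos]
    push_cast [-Complex.ofReal_cos, -Complex.ofReal_sin]
    linear_combination ((Real.cos φ : ℂ) - (Real.sin φ : ℂ)) * (-(rz0:ℂ)/4) * h2
end
end

section
/- For the weak+vacuum decoy state method with intensities μ > ν > 0, if the yields of n-photon pulses are Y_n ∈ [0,1] so that Q_γ e^γ = Σ_n Y_n γ^n/n! for γ ∈ {μ, ν} and Q_vac = Y_0, then the single-photon gain satisfies Q_1 = Y_1 μ e^{−μ} ≥ (μ² e^{−μ}/(μν − ν²))[Q_ν e^ν − Q_μ e^μ (ν/μ)² − Q_vac(μ²−ν²)/μ²]. -/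
/-! Subtracting `(ν/μ)²` times the `μ`-series from the `ν`-series cancels every term with
`n ≥ 2` up to a nonpositive remainder, since `ν^n ≤ (ν/μ)² μ^n` there. Only the vacuum and
single-photon terms survive, so `Q_ν e^ν − (ν/μ)² Q_μ e^μ − Y₀ (1 − ν²/μ²)` is at most
`Y₁ ν (μ − ν)/μ`, which rearranges to the bound. -/

open Finset

theorem tsum_sub_tsum_le_sum_range_of_tail_le {f g : ℕ → ℝ} (hf : Summable f) (hg : Summable g)
    (k : ℕ) (h : ∀ n, f (n + k) ≤ g (n + k)) :
    ∑' n, f n - ∑' n, g n ≤ ∑ i ∈ range k, (f i - g i) := by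
  rw [← hf.sum_add_tsum_nat_add k, ← hg.sum_add_tsum_nat_add k, sum_sub_distrib]
  have htail : ∑' n, f (n + k) ≤ ∑' n, g (n + k) :=
    Summable.tsum_le_tsum h ((summable_nat_add_iff k).mpr hf) ((summable_nat_add_iff k).mpr hg)
  linarith

theorem pow_add_two_le_div_sq_mul_pow {ν μ : ℝ} (hν : 0 ≤ ν) (hνμ : ν ≤ μ) (n : ℕ) :
    ν ^ (n + 2) ≤ (ν / μ) ^ 2 * μ ^ (n + 2) := by
  rcases hν.eq_or_lt with rfl | hν
  · simp
  have hμ : μ ≠ 0 := (hν.trans_le hνμ).ne'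
  calc ν ^ (n + 2) = ν ^ 2 * ν ^ n := by ring
    _ ≤ ν ^ 2 * μ ^ n := by gcongr
    _ = (ν / μ) ^ 2 * μ ^ (n + 2) := by field_simp; ring

theorem mul_pow_add_two_div_le {a d ν μ : ℝ} (ha : 0 ≤ a) (hd : 0 ≤ d) (hν : 0 ≤ ν) (hνμ : ν ≤ μ)
    (n : ℕ) : a * ν ^ (n + 2) / d ≤ (ν / μ) ^ 2 * (a * μ ^ (n + 2) / d) := by
  calc a * ν ^ (n + 2) / d ≤ a * ((ν / μ) ^ 2 * μ ^ (n + 2)) / d := by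
        gcongr
        exact pow_add_two_le_div_sq_mul_pow hν hνμ n
    _ = (ν / μ) ^ 2 * (a * μ ^ (n + 2) / d) := by ring

/-- weak+vacuum decoy-state lower bound on the single-photon gain:
    Q₁ = Y₁ μ e^{−μ} ≥ (μ²e^{−μ}/(μν − ν²))[Q_ν e^ν − Q_μ e^μ (ν/μ)² − Q_vac(μ²−ν²)/μ²]. -/
theorem stmt18 (μ ν : ℝ) (hν : 0 < ν) (hμν : ν < μ)
    (Y : ℕ → ℝ) (hY : ∀ n, Y n ∈ Set.Icc (0:ℝ) 1)
    (Qμ Qν Qvac : ℝ)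
    (hSμ : Summable (fun n : ℕ => Y n * μ^n / (n.factorial : ℝ)))
    (hSν : Summable (fun n : ℕ => Y n * ν^n / (n.factorial : ℝ)))
    (hQμ : Qμ * Real.exp μ = ∑' n : ℕ, Y n * μ^n / (n.factorial : ℝ))
    (hQν : Qν * Real.exp ν = ∑' n : ℕ, Y n * ν^n / (n.factorial : ℝ))
    (hQvac : Qvac = Y 0) :
    Y 1 * μ * Real.exp (-μ) ≥
      (μ^2 * Real.exp (-μ) / (μ*ν - ν^2)) *
        (Qν * Real.exp ν - Qμ * Real.exp μ * (ν/μ)^2 - Qvac * (μ^2 - ν^2)/μ^2) := by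
  have hμ : 0 < μ := hν.trans hμν
  have htail (n : ℕ) := mul_pow_add_two_div_le (hY (n + 2)).1 (Nat.cast_nonneg (n + 2).factorial)
    hν.le hμν.le n
  have hbracket : Qν * Real.exp ν - Qμ * Real.exp μ * (ν / μ) ^ 2 - Qvac * (μ ^ 2 - ν ^ 2) / μ ^ 2
      ≤ Y 1 * ν * (μ - ν) / μ := by
    have key := tsum_sub_tsum_le_sum_range_of_tail_le hSν (hSμ.mul_left ((ν / μ) ^ 2)) 2 htail
    rw [tsum_mul_left, ← hQν, ← hQμ] at key
    simp only [sum_range_succ, sum_range_zero, Nat.factorial_zero, Nat.factorial_one,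
      Nat.cast_one] at key
    rw [hQvac]
    field_simp at key ⊢
    linarith
  have hden : 0 < μ * ν - ν ^ 2 := by nlinarith
  rw [ge_iff_le, div_mul_eq_mul_div, div_le_iff₀ hden]
  calc μ ^ 2 * Real.exp (-μ) * _ ≤ μ ^ 2 * Real.exp (-μ) * (Y 1 * ν * (μ - ν) / μ) := by
        gcongr
    _ = Y 1 * μ * Real.exp (-μ) * (μ * ν - ν ^ 2) := by field_simp
end
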